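/- arXiv:0812.2242 — 2 statements merged into one kernel-verified Lean document; each statement's English description precedes it below -/
import Mathlib

section
/- Let n be a positive even natural number and σ a permutation of Fin n. If every player i uses the pointer-following strategy with n/2 openings (define a_i 0 = i, a_i (j+1) = σ⁻¹(a_i j); player i wins iff σ(i) ∈ {a_i 0, …, a_i (n/2 - 1)}), then all n players win if and only if σ has no cycle of length greater than n/2. -/
def cycleOf {n : ℕ} (σ : Equiv.Perm (Fin n)) (i : Fin n) : Finset (Fin n) :=
  (Finset.range n).image (fun k => (σ ^ k) i)

def opened {n : ℕ} (σ : Equiv.Perm (Fin n)) (i : Fin n) (j : ℕ) : Fin n :=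
  (σ.symm ^ j) i

lemma mem_pp {n : ℕ} [NeZero n] (σ : Equiv.Perm (Fin n)) (i : Fin n) :
    i ∈ Function.periodicPts σ := by
  refine Function.mk_mem_periodicPts (orderOf_pos σ) ?_
  show σ^[orderOf σ] i = i
  simp [Equiv.Perm.iterate_eq_pow, pow_orderOf_eq_one]

lemma card_cycleOf {n : ℕ} (hn : 0 < n) (σ : Equiv.Perm (Fin n)) (i : Fin n) :
    (cycleOf σ i).card = Function.minimalPeriod σ i := by
  have : NeZero n := ⟨hn.ne'⟩
  set m := Function.minimalPeriod σ i with hm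
  have hpp := mem_pp σ i
  have hmpos : 0 < m := Function.minimalPeriod_pos_of_mem_periodicPts hpp
  have hmod : ∀ k : ℕ, (σ ^ k) i = (σ ^ (k % m)) i := fun k =>
    (Function.iterate_mod_minimalPeriod_eq (f := ⇑σ) (x := i) (n := k)).symm
  have hinj : Set.InjOn (fun k => (σ ^ k) i) (Set.Iio m) :=
    Function.iterate_injOn_Iio_minimalPeriod (f := ⇑σ) (x := i)
  have hmn : m ≤ n := by
    have hcard : ((Finset.range m).image (fun k => (σ ^ k) i)).card = m := by
      rw [Finset.card_image_of_injOn, Finset.card_range]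
      intro a ha b hb
      exact hinj (by simpa using Finset.mem_range.mp ha) (by simpa using Finset.mem_range.mp hb)
    calc m = _ := hcard.symm
      _ ≤ Fintype.card (Fin n) := Finset.card_le_univ _
      _ = n := Fintype.card_fin n
  have heq : cycleOf σ i = (Finset.range m).image (fun k => (σ ^ k) i) := by
    apply Finset.Subset.antisymm
    · intro x hx
      obtain ⟨k, hk, rfl⟩ := Finset.mem_image.mp hx
      exact Finset.mem_image.mpr ⟨k % m, Finset.mem_range.mpr (Nat.mod_lt _ hmpos), (hmod k).symm⟩
    · intro x hx
      obtain ⟨k, hk, rfl⟩ := Finset.mem_image.mp hx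
      exact Finset.mem_image.mpr
        ⟨k, Finset.mem_range.mpr (lt_of_lt_of_le (Finset.mem_range.mp hk) hmn), rfl⟩
  rw [heq, Finset.card_image_of_injOn, Finset.card_range]
  intro a ha b hb
  exact hinj (by simpa using Finset.mem_range.mp ha) (by simpa using Finset.mem_range.mp hb)

/-- In the locker puzzle with `n` even and positive, if every player `i` uses the
pointer-following strategy with `n/2` openings, then all `n` players win (each finds
the locker `σ i` containing his label) if and only if `σ` has no cycle of length
greater than `n/2`. -/
theorem locker_all_win_iff_no_long_cycle
    (n : ℕ) (hn : 0 < n) (hne : Even n) (σ : Equiv.Perm (Fin n)) :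
    (∀ i : Fin n, σ i ∈ (Finset.range (n / 2)).image (opened σ i)) ↔
      (∀ i : Fin n, (cycleOf σ i).card ≤ n / 2) := by
  have : NeZero n := ⟨hn.ne'⟩
  have key : ∀ i : Fin n,
      (σ i ∈ (Finset.range (n / 2)).image (opened σ i)) ↔
      Function.minimalPeriod σ i ≤ n / 2 := by
    intro i
    set m := Function.minimalPeriod σ i with hm
    have hpp := mem_pp σ i
    have hmpos : 0 < m := Function.minimalPeriod_pos_of_mem_periodicPts hpp
    have hstep : ∀ j : ℕ, opened σ i j = σ i ↔ m ∣ (j + 1) := by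
      intro j
      have h1 : opened σ i j = σ i ↔ (σ ^ (j + 1)) i = i := by
        unfold opened
        have hs : (σ.symm ^ j) i = (σ ^ j).symm i := by
          rw [show σ.symm = σ⁻¹ from rfl, inv_pow]; rfl
        rw [hs, Equiv.symm_apply_eq, pow_succ, Equiv.Perm.mul_apply, eq_comm]
      rw [h1]
      have h2 : ((σ ^ (j + 1)) i = i) ↔ Function.IsPeriodicPt σ (j + 1) i := Iff.rfl
      rw [h2, ← Function.isPeriodicPt_iff_minimalPeriod_dvd]
    constructor
    · intro h
      obtain ⟨j, hj, hje⟩ := Finset.mem_image.mp h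
      have hjlt := Finset.mem_range.mp hj
      have hdvd := (hstep j).mp hje
      calc m ≤ j + 1 := Nat.le_of_dvd (Nat.succ_pos j) hdvd
        _ ≤ n / 2 := hjlt
    · intro hle
      refine Finset.mem_image.mpr ⟨m - 1, Finset.mem_range.mpr ?_, ?_⟩
      · omega
      · exact (hstep (m - 1)).mpr (by rw [Nat.sub_add_cancel hmpos])
  constructor
  · intro h i; rw [card_cycleOf hn]; exact (key i).mp (h i)
  · intro h i; exact (key i).mpr (by rw [← card_cycleOf hn]; exact h i)
end

section
/- Let n be a positive even natural number. The number of permutations of Fin n that contain some cycle of length strictly greater than n/2 equals ∑_{k=n/2+1}^{n} n!/k. Consequently, the proportion of permutations of Fin n containing a cycle of length greater than n/2 is ∑_{k=1}^{n/2} 1/(n/2 + k). -/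
open Finset Nat

namespace Equiv.Perm

variable {α : Type*} [Fintype α] [DecidableEq α]

theorem card_filter_forall_mem_apply_eq_self (s : Finset α) :
    #{τ : Perm α | ∀ a ∈ s, τ a = a} = (Fintype.card α - #s)! := by
  rw [← Fintype.card_subtype]
  have e : {τ : Perm α // ∀ a ∈ s, τ a = a} ≃ Perm {a // a ∉ s} :=
    ((Perm.subtypeEquivSubtypePerm (· ∉ s)).trans
      (Equiv.subtypeEquivRight fun τ => by simp only [not_not])).symm
  rw [Fintype.card_congr e, Fintype.card_perm, Fintype.card_subtype_compl, Fintype.card_coe]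

theorem card_filter_mem_cycleFactorsFinset {c : Perm α} (hc : c.IsCycle) :
    #{σ : Perm α | c ∈ σ.cycleFactorsFinset} = (Fintype.card α - #c.support)! := by
  rw [← card_filter_forall_mem_apply_eq_self]
  refine card_bij' (fun σ _ => c⁻¹ * σ) (fun τ _ => c * τ) ?_ ?_ ?_ ?_
  · intro σ hσ
    simp only [mem_filter, mem_univ, true_and, mem_cycleFactorsFinset_iff] at hσ ⊢
    intro a ha
    rw [mul_apply, ← hσ.2 a ha]
    exact c.symm_apply_apply a
  · intro τ hτ
    simp only [mem_filter, mem_univ, true_and, mem_cycleFactorsFinset_iff] at hτ ⊢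
    exact ⟨hc, fun a ha => by rw [mul_apply, hτ a ha]⟩
  · simp
  · simp

theorem eq_of_mem_cycleFactorsFinset_of_card_lt {σ c d : Perm α}
    (hc : c ∈ σ.cycleFactorsFinset) (hd : d ∈ σ.cycleFactorsFinset)
    (h : Fintype.card α < #c.support + #d.support) : c = d := by
  by_contra hcd
  have hdisj := (σ.cycleFactorsFinset_pairwise_disjoint hc hd hcd).disjoint_support
  have := card_union_of_disjoint hdisj ▸ card_le_univ (c.support ∪ d.support)
  omega

theorem cycleType_eq_singleton_iff {σ : Perm α} {k : ℕ} :
    σ.cycleType = {k} ↔ σ.IsCycle ∧ #σ.support = k := by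
  refine ⟨fun h => ⟨card_cycleType_eq_one.1 (by simp [h]), ?_⟩, fun ⟨hσ, hk⟩ => hk ▸ hσ.cycleType⟩
  rw [← sum_cycleType, h, Multiset.sum_singleton]

theorem card_cycleType_singleton_mul_factorial {k : ℕ} (hk : 2 ≤ k) (hkα : k ≤ Fintype.card α) :
    #{c : Perm α | c.cycleType = {k}} * (Fintype.card α - k)! = (Fintype.card α)! / k := by
  rw [card_of_cycleType_singleton hk hkα]
  refine (Nat.div_eq_of_eq_mul_left (by omega) ?_).symm
  rw [← Nat.choose_mul_factorial_mul_factorial hkα, ← Nat.mul_factorial_pred (by omega : k ≠ 0)]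
  ring

theorem card_filter_exists_mem_cycleFactorsFinset_lt_card_support {m : ℕ} (hm : 1 ≤ m)
    (hα : Fintype.card α ≤ 2 * m + 1) :
    #{σ : Perm α | ∃ c ∈ σ.cycleFactorsFinset, m < #c.support}
      = ∑ k ∈ Icc (m + 1) (Fintype.card α), (Fintype.card α)! / k := by
  classical
  have hunion : ({σ : Perm α | ∃ c ∈ σ.cycleFactorsFinset, m < #c.support} : Finset _)
      = ({c : Perm α | c.IsCycle ∧ m < #c.support} : Finset _).biUnion
          fun c => {σ | c ∈ σ.cycleFactorsFinset} := by
    ext σ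
    simp only [mem_filter, mem_univ, true_and, mem_biUnion]
    exact ⟨fun ⟨c, hc, hmc⟩ => ⟨c, ⟨(mem_cycleFactorsFinset_iff.1 hc).1, hmc⟩, hc⟩,
      fun ⟨c, ⟨_, hmc⟩, hc⟩ => ⟨c, hc, hmc⟩⟩
  have hdisj : Set.PairwiseDisjoint
      (({c : Perm α | c.IsCycle ∧ m < #c.support} : Finset _) : Set (Perm α))
      fun c => ({σ : Perm α | c ∈ σ.cycleFactorsFinset} : Finset _) := by
    intro c hc d hd hcd
    simp only [coe_filter, mem_univ, true_and, Set.mem_ofPred_eq] at hc hd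
    refine disjoint_filter.2 fun σ _ hcσ hdσ => hcd ?_
    exact eq_of_mem_cycleFactorsFinset_of_card_lt hcσ hdσ (by omega)
  have hmaps : ∀ c ∈ ({c : Perm α | c.IsCycle ∧ m < #c.support} : Finset _),
      #c.support ∈ Icc (m + 1) (Fintype.card α) := by
    intro c hc
    simp only [mem_filter, mem_univ, true_and] at hc
    exact mem_Icc.2 ⟨hc.2, card_le_univ _⟩
  rw [hunion, card_biUnion hdisj, ← sum_fiberwise_of_maps_to hmaps]
  refine sum_congr rfl fun k hk => ?_
  rw [mem_Icc] at hk
  rw [← card_cycleType_singleton_mul_factorial (by omega) hk.2, filter_filter, ← smul_eq_mul,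
    ← sum_const]
  refine sum_congr ?_ fun c hc => ?_
  · ext c
    simp only [mem_filter, mem_univ, true_and, cycleType_eq_singleton_iff]
    constructor
    · rintro ⟨⟨hc, -⟩, rfl⟩; exact ⟨hc, rfl⟩
    · rintro ⟨hc, rfl⟩; exact ⟨⟨hc, hk.1⟩, rfl⟩
  · simp only [mem_filter, mem_univ, true_and, cycleType_eq_singleton_iff] at hc
    rw [card_filter_mem_cycleFactorsFinset hc.1, hc.2]

theorem filter_sameCycle_eq_support_cycleOf {σ : Perm α} {x : α} (hx : x ∈ σ.support) :
    ({y | σ.SameCycle x y} : Finset α) = (σ.cycleOf x).support := by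
  ext y
  simp only [mem_filter, mem_univ, true_and, mem_support_cycleOf_iff, hx, and_true]

theorem exists_lt_card_filter_sameCycle_iff {m : ℕ} (hm : 1 ≤ m) (σ : Perm α) :
    (∃ x, m < #{y | σ.SameCycle x y}) ↔ ∃ c ∈ σ.cycleFactorsFinset, m < #c.support := by
  constructor
  · rintro ⟨x, hx⟩
    have hxσ : x ∈ σ.support := by
      by_contra hxσ
      have hfix : ({y | σ.SameCycle x y} : Finset α) = {x} := by
        ext y
        simp only [mem_filter, mem_univ, true_and, mem_singleton]
        exact ⟨fun h => (h.eq_of_left (notMem_support.1 hxσ)).symm, fun h => h ▸ SameCycle.rfl⟩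
      rw [hfix, card_singleton] at hx
      omega
    refine ⟨σ.cycleOf x, cycleOf_mem_cycleFactorsFinset_iff.2 hxσ, ?_⟩
    rwa [← filter_sameCycle_eq_support_cycleOf hxσ]
  · rintro ⟨c, hc, hmc⟩
    obtain ⟨x, hx⟩ := (mem_cycleFactorsFinset_iff.1 hc).1.nonempty_support
    refine ⟨x, ?_⟩
    rwa [filter_sameCycle_eq_support_cycleOf (mem_cycleFactorsFinset_support_le hc hx),
      ← cycle_is_cycleOf hx hc]

end Equiv.Perm

open Equiv

theorem cycleOf_eq_filter_sameCycle {n : ℕ} (σ : Perm (Fin n)) (i : Fin n) :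
    cycleOf σ i = ({j | σ.SameCycle i j} : Finset (Fin n)) := by
  ext j
  simp only [cycleOf, mem_image, mem_range, mem_filter, mem_univ, true_and]
  constructor
  · rintro ⟨k, -, rfl⟩
    exact ⟨k, by simp⟩
  · intro h
    by_cases hi : i ∈ σ.support
    · obtain ⟨k, hk, rfl⟩ := h.exists_pow_eq_of_mem_support hi
      exact ⟨k, hk.trans_le ((card_le_univ _).trans_eq (Fintype.card_fin n)), rfl⟩
    · exact ⟨0, i.pos, by simpa using h.eq_of_left (Perm.notMem_support.1 hi)⟩

theorem card_filter_exists_lt_card_cycleOf {n m : ℕ} (hm : 1 ≤ m) (hn : n ≤ 2 * m + 1) :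
    #{σ : Perm (Fin n) | ∃ i, m < #(cycleOf σ i)} = ∑ k ∈ Icc (m + 1) n, n ! / k := by
  simp_rw [cycleOf_eq_filter_sameCycle, Perm.exists_lt_card_filter_sameCycle_iff hm]
  simpa using Perm.card_filter_exists_mem_cycleFactorsFinset_lt_card_support
    (α := Fin n) hm (by simpa using hn)

theorem cast_sum_factorial_div_div_factorial {N a b : ℕ} (ha : 1 ≤ a) (hb : b ≤ N) :
    ((∑ k ∈ Icc a b, N ! / k : ℕ) : ℝ) / N ! = ∑ k ∈ Icc a b, 1 / (k : ℝ) := by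
  rw [Nat.cast_sum, sum_div]
  refine sum_congr rfl fun k hk => ?_
  rw [mem_Icc] at hk
  have hk0 : (k : ℝ) ≠ 0 := by exact_mod_cast (by omega : k ≠ 0)
  rw [Nat.cast_div (Nat.dvd_factorial (by omega) (by omega)) hk0]
  field_simp

/-- For `n` even and positive, the number of permutations of `Fin n` containing a cycle
of length strictly greater than `n/2` equals `∑_{k=n/2+1}^{n} n!/k`; consequently the
proportion of such permutations is `∑_{k=1}^{n/2} 1/(n/2 + k)`. -/
theorem card_and_proportion_long_cycle (n : ℕ) (hn : 0 < n) (hne : Even n) :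
    (Finset.univ.filter
        (fun σ : Equiv.Perm (Fin n) => ∃ i : Fin n, n / 2 < (cycleOf σ i).card)).card
      = ∑ k ∈ Finset.Icc (n / 2 + 1) n, n.factorial / k
    ∧
    ((Finset.univ.filter
        (fun σ : Equiv.Perm (Fin n) => ∃ i : Fin n, n / 2 < (cycleOf σ i).card)).card : ℝ)
        / (n.factorial : ℝ)
      = ∑ k ∈ Finset.Icc 1 (n / 2), (1 : ℝ) / ((n / 2 + k : ℕ) : ℝ) := by
  obtain ⟨m, rfl⟩ := hne
  have hm : (m + m) / 2 = m := by omega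
  have hcard := card_filter_exists_lt_card_cycleOf (n := m + m) (m := m) (by omega) (by omega)
  rw [hm]
  refine ⟨hcard, ?_⟩
  rw [hcard, cast_sum_factorial_div_div_factorial (by omega) le_rfl, ← map_add_left_Icc, sum_map]
  simp
end
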